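/- Let n ≥ 1, let Ω ⊆ ℝⁿ be a bounded open set, let μ = f·Leb and ν = g·Leb be Borel probability measures, absolutely continuous with respect to Lebesgue measure, with spt μ ⊆ Ω, f ≤ Λ on spt μ, and g ≥ Λ⁻¹ on spt ν for some 0 < Λ < ∞. Let u be a Brenier solution on Ω pushing μ forward to ν. Then for every compact set S ⊆ Ω, Leb(∂u(S) ∩ spt ν) ≤ Λ² · Leb(S), where ∂u(S) := ⋃_{x ∈ S} ∂u(x). -/
import Mathlib


open MeasureTheory Set Metric RealInnerProductSpace

noncomputable section

/-- The (global) subdifferential of `u : Ω → ℝ` at `x`: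
`∂u(x) = {p | ∀ y ∈ Ω, u y ≥ u x + ⟨p, y - x⟩}`. -/
def subdiff {n : ℕ} (Ω : Set (EuclideanSpace ℝ (Fin n))) (u : EuclideanSpace ℝ (Fin n) → ℝ)
    (x : EuclideanSpace ℝ (Fin n)) : Set (EuclideanSpace ℝ (Fin n)) :=
  {p | ∀ y ∈ Ω, u x + ⟪p, y - x⟫ ≤ u y}

/-- The support of a Borel measure: points all of whose open neighborhoods have
positive measure. -/
def msupport {n : ℕ} (μ : Measure (EuclideanSpace ℝ (Fin n))) :
    Set (EuclideanSpace ℝ (Fin n)) :=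
  {x | ∀ U : Set (EuclideanSpace ℝ (Fin n)), IsOpen U → x ∈ U → μ U ≠ 0}

/-- A Brenier solution on `Ω` pushing `μ` forward to `ν`: a convex function `u` on `Ω`
(expressed by the existence of a global supporting affine function at each point of `Ω`),
with `spt μ ⊆ Ω`, whose gradient map pushes `μ` forward to `ν` and maps points of
differentiability in `spt μ` into `spt ν`. -/
structure IsBrenierSol {n : ℕ} (Ω : Set (EuclideanSpace ℝ (Fin n)))
    (μ ν : Measure (EuclideanSpace ℝ (Fin n))) (u : EuclideanSpace ℝ (Fin n) → ℝ) : Prop where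
  convex : ∀ x ∈ Ω, (subdiff Ω u x).Nonempty
  support_subset : msupport μ ⊆ Ω
  map_grad : μ.map (fun x => gradient u x) = ν
  grad_mem_support : ∀ x ∈ msupport μ, DifferentiableAt ℝ u x → gradient u x ∈ msupport ν

/-- `x₀` is an isolated singular point of `u` (as a function on `Ω`): `u` is not
differentiable at `x₀`, but is differentiable on `N \ {x₀}` for some open
neighborhood `N ⊆ Ω` of `x₀`. -/
def IsIsolatedSingPt {n : ℕ} (Ω : Set (EuclideanSpace ℝ (Fin n)))
    (u : EuclideanSpace ℝ (Fin n) → ℝ) (x₀ : EuclideanSpace ℝ (Fin n)) : Prop :=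
  x₀ ∈ Ω ∧ ¬ DifferentiableAt ℝ u x₀ ∧
    ∃ N : Set (EuclideanSpace ℝ (Fin n)), N ⊆ Ω ∧ IsOpen N ∧ x₀ ∈ N ∧
      ∀ x ∈ N \ {x₀}, DifferentiableAt ℝ u x

/-- `O` is a hole in `A`: a nonempty bounded open connected set disjoint from the interior
of `A` whose frontier is contained in the frontier of `A`. -/
def IsHole {n : ℕ} (A O : Set (EuclideanSpace ℝ (Fin n))) : Prop :=
  O.Nonempty ∧ IsOpen O ∧ IsConnected O ∧ Bornology.IsBounded O ∧
    O ∩ interior A = ∅ ∧ frontier O ⊆ frontier A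

variable {n : ℕ}

lemma aux_isClosed_msupport (μ : Measure (EuclideanSpace ℝ (Fin n))) :
    IsClosed (msupport μ) := by
  rw [← isOpen_compl_iff, isOpen_iff_forall_mem_open]
  intro x hx
  simp only [msupport, mem_compl_iff, mem_setOf_eq, not_forall] at hx
  obtain ⟨U, hUo, hxU, hU0⟩ := hx
  rw [not_not] at hU0
  exact ⟨U, fun y hy hmem => hmem U hUo hy hU0, hUo, hxU⟩

lemma aux_measure_compl_msupport (μ : Measure (EuclideanSpace ℝ (Fin n))) :
    μ (msupport μ)ᶜ = 0 := by
  apply measure_null_of_locally_null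
  intro x hx
  simp only [msupport, mem_compl_iff, mem_setOf_eq, not_forall] at hx
  obtain ⟨U, hUo, hxU, hU0⟩ := hx
  rw [not_not] at hU0
  exact ⟨U, mem_nhdsWithin_of_mem_nhds (hUo.mem_nhds hxU), hU0⟩

lemma aux_convexOn {Ω C : Set (EuclideanSpace ℝ (Fin n))} {u : EuclideanSpace ℝ (Fin n) → ℝ}
    (hC : Convex ℝ C) (hCΩ : C ⊆ Ω) (h : ∀ x ∈ Ω, (subdiff Ω u x).Nonempty) :
    ConvexOn ℝ C u := by
  refine ⟨hC, fun x hx y hy a b ha hb hab => ?_⟩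
  set m := a • x + b • y with hm
  obtain ⟨p, hp⟩ := h m (hCΩ (hC hx hy ha hb hab))
  have h1 := hp x (hCΩ hx)
  have h2 := hp y (hCΩ hy)
  have key : a • (x - m) + b • (y - m) = 0 := by
    rw [smul_sub, smul_sub, show a • x - a • m + (b • y - b • m)
      = (a • x + b • y) - (a + b) • m by rw [add_smul]; abel, hab, one_smul, ← hm, sub_self]
  have hz : a * ⟪p, x - m⟫ + b * ⟪p, y - m⟫ = 0 := by
    rw [← real_inner_smul_right, ← real_inner_smul_right, ← inner_add_right, key,
      inner_zero_right]
  simp only [smul_eq_mul]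
  have e3 : a * u m + b * u m = u m := by rw [← add_mul, hab, one_mul]
  linarith [mul_le_mul_of_nonneg_left h1 ha, mul_le_mul_of_nonneg_left h2 hb]

lemma aux_exists_lip {Ω : Set (EuclideanSpace ℝ (Fin n))} {u : EuclideanSpace ℝ (Fin n) → ℝ}
    (hΩo : IsOpen Ω) (h : ∀ x ∈ Ω, (subdiff Ω u x).Nonempty)
    {x : EuclideanSpace ℝ (Fin n)} (hx : x ∈ Ω) :
    ∃ r > 0, ball x r ⊆ Ω ∧ ∃ K, LipschitzOnWith K u (ball x r) := by
  obtain ⟨ε, hε, hball⟩ := Metric.isOpen_iff.1 hΩo x hx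
  have hcvx : ConvexOn ℝ (ball x ε) u := aux_convexOn (convex_ball x ε) hball h
  obtain ⟨K, t, ht, hK⟩ := hcvx.locallyLipschitzOn isOpen_ball (mem_ball_self hε)
  rw [isOpen_ball.nhdsWithin_eq (mem_ball_self hε)] at ht
  obtain ⟨r, hr, hrt⟩ := Metric.mem_nhds_iff.1 ht
  refine ⟨min r ε, lt_min hr hε, (ball_subset_ball (min_le_right _ _)).trans hball,
    K, hK.mono ((ball_subset_ball (min_le_left _ _)).trans hrt)⟩

lemma aux_continuousOn {Ω : Set (EuclideanSpace ℝ (Fin n))} {u : EuclideanSpace ℝ (Fin n) → ℝ}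
    (hΩo : IsOpen Ω) (h : ∀ x ∈ Ω, (subdiff Ω u x).Nonempty) :
    ContinuousOn u Ω := by
  intro x hx
  obtain ⟨r, hr, hrΩ, K, hK⟩ := aux_exists_lip hΩo h hx
  exact ((hK.continuousOn.continuousAt (ball_mem_nhds x hr))).continuousWithinAt

/-- Points where `u` fails to be differentiable inside `Ω` form a Lebesgue-null set. -/
lemma aux_null_nondiff {Ω : Set (EuclideanSpace ℝ (Fin n))} {u : EuclideanSpace ℝ (Fin n) → ℝ}
    (hΩo : IsOpen Ω) (h : ∀ x ∈ Ω, (subdiff Ω u x).Nonempty) :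
    volume {x | x ∈ Ω ∧ ¬ DifferentiableAt ℝ u x} = 0 := by
  apply measure_null_of_locally_null
  rintro x ⟨hxΩ, -⟩
  obtain ⟨r, hr, hrΩ, K, hK⟩ := aux_exists_lip hΩo h hxΩ
  refine ⟨{x | x ∈ Ω ∧ ¬ DifferentiableAt ℝ u x} ∩ ball x r,
    inter_mem_nhdsWithin _ (ball_mem_nhds x hr), ?_⟩
  have hae : ∀ᵐ z ∂(volume : Measure (EuclideanSpace ℝ (Fin n))),
      z ∈ ball x r → DifferentiableWithinAt ℝ u (ball x r) z :=
    hK.ae_differentiableWithinAt_of_mem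
  rw [← nonpos_iff_eq_zero]
  refine le_trans (measure_mono ?_) (le_of_eq (ae_iff.1 hae))
  rintro z ⟨⟨-, hznd⟩, hzb⟩
  simp only [mem_setOf_eq, not_forall]
  exact ⟨hzb, fun hd => hznd (hd.differentiableAt (isOpen_ball.mem_nhds hzb))⟩

/-- A global subgradient at a differentiability point equals the gradient. -/
lemma aux_subgrad_eq_gradient {h : EuclideanSpace ℝ (Fin n) → ℝ}
    {p x : EuclideanSpace ℝ (Fin n)} {s : Set (EuclideanSpace ℝ (Fin n))} (hs : s ∈ nhds x)
    (hd : DifferentiableAt ℝ h x) (hp : ∀ y ∈ s, h x + ⟪p, y - x⟫ ≤ h y) :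
    p = gradient h x := by
  have hmin : IsLocalMin (fun y => h y - ⟪p, y⟫) x := by
    filter_upwards [hs] with y hy
    have := hp y hy
    rw [inner_sub_right] at this
    linarith
  have hinner : DifferentiableAt ℝ (fun y : EuclideanSpace ℝ (Fin n) => ⟪p, y⟫) x :=
    (innerSL ℝ p).differentiableAt
  have hfd : HasFDerivAt (fun y => h y - ⟪p, y⟫) (fderiv ℝ h x - innerSL ℝ p) x :=
    hd.hasFDerivAt.sub (innerSL ℝ p).hasFDerivAt
  have hzero := hmin.hasFDerivAt_eq_zero hfd
  have hfderiv : fderiv ℝ h x = innerSL ℝ p := by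
    rwa [sub_eq_zero] at hzero
  refine ext_inner_right ℝ fun v => ?_
  show ⟪p, v⟫ = ⟪(InnerProductSpace.toDual ℝ _).symm (fderiv ℝ h x), v⟫
  rw [InnerProductSpace.toDual_symm_apply, hfderiv, innerSL_apply_apply]

/-- Legendre transform of `u` relative to `Ω`. -/
def auxConj (Ω : Set (EuclideanSpace ℝ (Fin n))) (u : EuclideanSpace ℝ (Fin n) → ℝ)
    (p : EuclideanSpace ℝ (Fin n)) : ℝ :=
  sSup ((fun y => ⟪p, y⟫ - u y) '' Ω)

lemma aux_bddAbove {Ω : Set (EuclideanSpace ℝ (Fin n))} {u : EuclideanSpace ℝ (Fin n) → ℝ}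
    {R : ℝ} (hΩR : Ω ⊆ closedBall 0 R) {x₀ p₀ : EuclideanSpace ℝ (Fin n)}
    (hx₀ : x₀ ∈ Ω) (hp₀ : p₀ ∈ subdiff Ω u x₀) (p : EuclideanSpace ℝ (Fin n)) :
    BddAbove ((fun y => ⟪p, y⟫ - u y) '' Ω) := by
  refine ⟨‖p - p₀‖ * R + (⟪p₀, x₀⟫ - u x₀), ?_⟩
  rintro z ⟨y, hy, rfl⟩
  have h1 := hp₀ y hy
  rw [inner_sub_right] at h1
  have h2 : ⟪p - p₀, y⟫ ≤ ‖p - p₀‖ * R := by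
    refine (real_inner_le_norm _ _).trans ?_
    have hyR : ‖y‖ ≤ R := by simpa [mem_closedBall, dist_zero_right] using hΩR hy
    exact mul_le_mul_of_nonneg_left hyR (norm_nonneg _)
  rw [inner_sub_left] at h2
  simp only
  linarith

lemma aux_conj_lip {Ω : Set (EuclideanSpace ℝ (Fin n))} {u : EuclideanSpace ℝ (Fin n) → ℝ}
    {R : ℝ} (hR0 : 0 ≤ R) (hΩR : Ω ⊆ closedBall 0 R) {x₀ p₀ : EuclideanSpace ℝ (Fin n)}
    (hx₀ : x₀ ∈ Ω) (hp₀ : p₀ ∈ subdiff Ω u x₀) :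
    LipschitzWith R.toNNReal (auxConj Ω u) := by
  have hne : Ω.Nonempty := ⟨x₀, hx₀⟩
  have key : ∀ q q' : EuclideanSpace ℝ (Fin n),
      auxConj Ω u q ≤ auxConj Ω u q' + R * dist q q' := by
    intro q q'
    refine csSup_le (hne.image _) ?_
    rintro z ⟨y, hy, rfl⟩
    have hle : ⟪q', y⟫ - u y ≤ auxConj Ω u q' :=
      le_csSup (aux_bddAbove hΩR hx₀ hp₀ q') (mem_image_of_mem _ hy)
    have h2 : ⟪q - q', y⟫ ≤ ‖q - q'‖ * R := by
      refine (real_inner_le_norm _ _).trans ?_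
      have hyR : ‖y‖ ≤ R := by simpa [mem_closedBall, dist_zero_right] using hΩR hy
      exact mul_le_mul_of_nonneg_left hyR (norm_nonneg _)
    rw [inner_sub_left] at h2
    rw [dist_eq_norm]
    simp only
    linarith
  refine LipschitzWith.of_dist_le_mul fun q q' => ?_
  rw [Real.dist_eq, Real.coe_toNNReal R hR0, abs_sub_le_iff]
  constructor
  · have := key q q'; rw [mul_comm] at this; linarith
  · have := key q' q; rw [mul_comm, dist_comm] at this; linarith

lemma aux_conj_eq {Ω : Set (EuclideanSpace ℝ (Fin n))} {u : EuclideanSpace ℝ (Fin n) → ℝ}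
    {R : ℝ} (hΩR : Ω ⊆ closedBall 0 R) {x₀ p₀ x p : EuclideanSpace ℝ (Fin n)}
    (hx₀ : x₀ ∈ Ω) (hp₀ : p₀ ∈ subdiff Ω u x₀)
    (hx : x ∈ Ω) (hp : p ∈ subdiff Ω u x) :
    auxConj Ω u p = ⟪p, x⟫ - u x := by
  refine le_antisymm (csSup_le (Set.Nonempty.image _ ⟨x, hx⟩) ?_)
    (le_csSup (aux_bddAbove hΩR hx₀ hp₀ p) (mem_image_of_mem _ hx))
  rintro z ⟨y, hy, rfl⟩
  have := hp y hy
  rw [inner_sub_right] at this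
  simp only
  linarith

lemma aux_conj_subgrad {Ω : Set (EuclideanSpace ℝ (Fin n))} {u : EuclideanSpace ℝ (Fin n) → ℝ}
    {R : ℝ} (hΩR : Ω ⊆ closedBall 0 R) {x₀ p₀ x p : EuclideanSpace ℝ (Fin n)}
    (hx₀ : x₀ ∈ Ω) (hp₀ : p₀ ∈ subdiff Ω u x₀)
    (hx : x ∈ Ω) (hp : p ∈ subdiff Ω u x) (q : EuclideanSpace ℝ (Fin n)) :
    auxConj Ω u p + ⟪x, q - p⟫ ≤ auxConj Ω u q := by
  have h1 : auxConj Ω u p = ⟪p, x⟫ - u x := aux_conj_eq hΩR hx₀ hp₀ hx hp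
  have h2 : ⟪q, x⟫ - u x ≤ auxConj Ω u q :=
    le_csSup (aux_bddAbove hΩR hx₀ hp₀ q) (mem_image_of_mem _ hx)
  have h3 : ⟪x, q - p⟫ = ⟪q, x⟫ - ⟪p, x⟫ := by
    rw [inner_sub_right, real_inner_comm x q, real_inner_comm x p]
  linarith

lemma aux_two_subgrads {Ω : Set (EuclideanSpace ℝ (Fin n))} {u : EuclideanSpace ℝ (Fin n) → ℝ}
    {R : ℝ} (hΩR : Ω ⊆ closedBall 0 R) {x₀ p₀ x y p : EuclideanSpace ℝ (Fin n)}
    (hx₀ : x₀ ∈ Ω) (hp₀ : p₀ ∈ subdiff Ω u x₀)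
    (hx : x ∈ Ω) (hpx : p ∈ subdiff Ω u x)
    (hy : y ∈ Ω) (hpy : p ∈ subdiff Ω u y) (hxy : x ≠ y) :
    ¬ DifferentiableAt ℝ (auxConj Ω u) p := by
  intro hdiff
  have e1 : x = gradient (auxConj Ω u) p :=
    aux_subgrad_eq_gradient Filter.univ_mem hdiff
      (fun q _ => aux_conj_subgrad hΩR hx₀ hp₀ hx hpx q)
  have e2 : y = gradient (auxConj Ω u) p :=
    aux_subgrad_eq_gradient Filter.univ_mem hdiff
      (fun q _ => aux_conj_subgrad hΩR hx₀ hp₀ hy hpy q)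
  exact hxy (e1.trans e2.symm)

lemma aux_grad_mem_subdiff {Ω : Set (EuclideanSpace ℝ (Fin n))} {u : EuclideanSpace ℝ (Fin n) → ℝ}
    (hΩo : IsOpen Ω) (h : ∀ x ∈ Ω, (subdiff Ω u x).Nonempty)
    {x : EuclideanSpace ℝ (Fin n)} (hx : x ∈ Ω) (hd : DifferentiableAt ℝ u x) :
    gradient u x ∈ subdiff Ω u x := by
  obtain ⟨p, hp⟩ := h x hx
  have := aux_subgrad_eq_gradient (hΩo.mem_nhds hx) hd hp
  exact this ▸ hp

lemma aux_isClosed_T {Ω S : Set (EuclideanSpace ℝ (Fin n))} {u : EuclideanSpace ℝ (Fin n) → ℝ}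
    (hΩo : IsOpen Ω) (hcont : ContinuousOn u Ω) (hSc : IsCompact S) (hSΩ : S ⊆ Ω) :
    IsClosed (⋃ x ∈ S, subdiff Ω u x) := by
  refine IsSeqClosed.isClosed ?_
  intro pk p hpk hlim
  simp only [mem_iUnion, exists_prop] at hpk
  choose xk hxkS hxk using hpk
  obtain ⟨a, haS, φ, hφ, hxφ⟩ := hSc.tendsto_subseq hxkS
  simp only [mem_iUnion, exists_prop]
  refine ⟨a, haS, fun y hy => ?_⟩
  have hpφ : Filter.Tendsto (fun k => pk (φ k)) Filter.atTop (nhds p) :=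
    hlim.comp hφ.tendsto_atTop
  have hua : Filter.Tendsto (fun k => u (xk (φ k))) Filter.atTop (nhds (u a)) :=
    ((hcont.continuousAt (hΩo.mem_nhds (hSΩ haS))).tendsto).comp hxφ
  have hin : Filter.Tendsto (fun k => ⟪pk (φ k), y - xk (φ k)⟫) Filter.atTop
      (nhds ⟪p, y - a⟫) :=
    hpφ.inner (tendsto_const_nhds.sub hxφ)
  exact le_of_tendsto (hua.add hin)
    (Filter.Eventually.of_forall fun k => hxk (φ k) y hy)

lemma aux_measurable_grad (u : EuclideanSpace ℝ (Fin n) → ℝ) :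
    Measurable (fun x => gradient u x) := by
  have : (fun x => gradient u x)
      = fun x => (InnerProductSpace.toDual ℝ (EuclideanSpace ℝ (Fin n))).symm (fderiv ℝ u x) :=
    rfl
  rw [this]
  exact (InnerProductSpace.toDual ℝ (EuclideanSpace ℝ (Fin n))).symm.continuous.measurable.comp
    (measurable_fderiv ℝ u)

/-- **Monge–Ampère-type volume bound (Euclidean case).** For a Brenier solution `u`
between `μ = f·Leb` and `ν = g·Leb` with `f ≤ Λ` on `spt μ` and `g ≥ Λ⁻¹` on `spt ν`,
one has `Leb(∂u(S) ∩ spt ν) ≤ Λ² Leb(S)` for every compact `S ⊆ Ω`. -/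
theorem subdiff_volume_bound
    (n : ℕ) (hn : 1 ≤ n)
    (Ω : Set (EuclideanSpace ℝ (Fin n)))
    (hΩo : IsOpen Ω) (hΩb : Bornology.IsBounded Ω)
    (μ ν : Measure (EuclideanSpace ℝ (Fin n))) (f g : EuclideanSpace ℝ (Fin n) → ℝ)
    (Λ : ℝ) (hΛ : 0 < Λ)
    (hμp : IsProbabilityMeasure μ) (hνp : IsProbabilityMeasure ν)
    (hμd : μ = volume.withDensity (fun x => ENNReal.ofReal (f x)))
    (hνd : ν = volume.withDensity (fun x => ENNReal.ofReal (g x)))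
    (hμs : msupport μ ⊆ Ω)
    (hf : ∀ x ∈ msupport μ, f x ≤ Λ)
    (hg : ∀ x ∈ msupport ν, Λ⁻¹ ≤ g x)
    (u : EuclideanSpace ℝ (Fin n) → ℝ) (hu : IsBrenierSol Ω μ ν u) :
    ∀ S : Set (EuclideanSpace ℝ (Fin n)), IsCompact S → S ⊆ Ω →
      volume ((⋃ x ∈ S, subdiff Ω u x) ∩ msupport ν)
        ≤ ENNReal.ofReal (Λ ^ 2) * volume S := by
  intro S hSc hSΩ
  have hsptne : (msupport μ).Nonempty := by
    rcases Set.eq_empty_or_nonempty (msupport μ) with h | h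
    · exfalso
      have h0 := aux_measure_compl_msupport μ
      rw [h, compl_empty, measure_univ] at h0
      exact one_ne_zero h0
    · exact h
  obtain ⟨x₀, hx₀s⟩ := hsptne
  have hx₀ : x₀ ∈ Ω := hμs hx₀s
  obtain ⟨p₀, hp₀⟩ := hu.convex x₀ hx₀
  obtain ⟨r0, hr0⟩ := hΩb.subset_closedBall 0
  have hR0 : (0:ℝ) ≤ max r0 0 := le_max_right _ _
  have hΩR : Ω ⊆ closedBall 0 (max r0 0) :=
    hr0.trans (closedBall_subset_closedBall (le_max_left _ _))
  set G := fun x => gradient u x with hG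
  set T := ⋃ x ∈ S, subdiff Ω u x with hT
  have hTc : IsClosed T := aux_isClosed_T hΩo (aux_continuousOn hΩo hu.convex) hSc hSΩ
  have hTm : MeasurableSet T := hTc.measurableSet
  set Efin := T ∩ msupport ν with hE
  have hEm : MeasurableSet Efin := hTm.inter (aux_isClosed_msupport ν).measurableSet
  -- Step 1 : volume Efin ≤ Λ ν Efin
  have step1 : volume Efin ≤ ENNReal.ofReal Λ * ν Efin := by
    have hν : ν Efin = ∫⁻ x in Efin, ENNReal.ofReal (g x) := by
      rw [hνd, withDensity_apply _ hEm]
    have hlow : ENNReal.ofReal Λ⁻¹ * volume Efin ≤ ν Efin := by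
      rw [hν, ← setLIntegral_const]
      refine lintegral_mono_ae ((ae_restrict_iff' hEm).2 (Filter.Eventually.of_forall ?_))
      exact fun x hx => ENNReal.ofReal_le_ofReal (hg x hx.2)
    calc volume Efin = (ENNReal.ofReal Λ * ENNReal.ofReal Λ⁻¹) * volume Efin := by
          rw [← ENNReal.ofReal_mul hΛ.le, mul_inv_cancel₀ hΛ.ne', ENNReal.ofReal_one, one_mul]
      _ = ENNReal.ofReal Λ * (ENNReal.ofReal Λ⁻¹ * volume Efin) := by rw [mul_assoc]
      _ ≤ ENNReal.ofReal Λ * ν Efin := mul_le_mul_right hlow _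
  -- Step 2 : ν T = μ (G⁻¹ T)
  have step2 : ν T = μ (G ⁻¹' T) := by
    rw [← hu.map_grad, Measure.map_apply (aux_measurable_grad u) hTm]
  -- Step 3 : μ (G⁻¹ T) ≤ μ S
  set N := {q : EuclideanSpace ℝ (Fin n) | ¬ DifferentiableAt ℝ (auxConj Ω u) q} with hN
  set Bad := {x | x ∈ Ω ∧ ¬ DifferentiableAt ℝ u x} with hB
  have hincl : G ⁻¹' T ⊆ S ∪ (msupport μ)ᶜ ∪ Bad ∪ G ⁻¹' N := by
    intro x hxT
    by_cases hxs : x ∈ msupport μ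
    swap
    · exact Or.inl (Or.inl (Or.inr hxs))
    have hxΩ : x ∈ Ω := hμs hxs
    by_cases hxd : DifferentiableAt ℝ u x
    swap
    · exact Or.inl (Or.inr ⟨hxΩ, hxd⟩)
    have hgx : G x ∈ subdiff Ω u x := aux_grad_mem_subdiff hΩo hu.convex hxΩ hxd
    rw [hT] at hxT
    simp only [mem_preimage, mem_iUnion, exists_prop] at hxT
    obtain ⟨y, hyS, hgy⟩ := hxT
    by_cases hxy : x = y
    · exact Or.inl (Or.inl (Or.inl (hxy ▸ hyS)))
    · exact Or.inr (aux_two_subgrads hΩR hx₀ hp₀ hxΩ hgx (hSΩ hyS) hgy hxy)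
  have hμvol : μ ≪ volume := by rw [hμd]; exact withDensity_absolutelyContinuous _ _
  have hνvol : ν ≪ volume := by rw [hνd]; exact withDensity_absolutelyContinuous _ _
  have hBadnull : μ Bad = 0 := hμvol (aux_null_nondiff hΩo hu.convex)
  have hNnull : (volume : Measure (EuclideanSpace ℝ (Fin n))) N = 0 := by
    have := (aux_conj_lip hR0 hΩR hx₀ hp₀).ae_differentiableAt
      (μ := (volume : Measure (EuclideanSpace ℝ (Fin n))))
    exact ae_iff.1 this
  have hNm : MeasurableSet N := (measurableSet_of_differentiableAt ℝ _).compl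
  have hGN : μ (G ⁻¹' N) = 0 := by
    rw [← Measure.map_apply (aux_measurable_grad u) hNm, hu.map_grad]
    exact hνvol hNnull
  have step3 : μ (G ⁻¹' T) ≤ μ S := by
    refine (measure_mono hincl).trans ?_
    refine le_trans (measure_union_le _ _) ?_
    rw [hGN, add_zero]
    refine le_trans (measure_union_le _ _) ?_
    rw [hBadnull, add_zero]
    refine le_trans (measure_union_le _ _) ?_
    rw [aux_measure_compl_msupport μ, add_zero]
  -- Step 4 : μ S ≤ Λ volume S
  have hSm : MeasurableSet S := hSc.isClosed.measurableSet
  set K := S ∩ msupport μ with hK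
  have hKm : MeasurableSet K := hSm.inter (aux_isClosed_msupport μ).measurableSet
  have step4 : μ S ≤ ENNReal.ofReal Λ * volume S := by
    have hsub : S ⊆ K ∪ (msupport μ)ᶜ := by
      intro x hx
      by_cases h : x ∈ msupport μ
      · exact Or.inl ⟨hx, h⟩
      · exact Or.inr h
    have h1 : μ K ≤ ENNReal.ofReal Λ * volume K := by
      rw [hμd, withDensity_apply _ hKm, ← setLIntegral_const]
      refine lintegral_mono_ae ((ae_restrict_iff' hKm).2 (Filter.Eventually.of_forall ?_))
      exact fun x hx => ENNReal.ofReal_le_ofReal (hf x hx.2)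
    calc μ S ≤ μ K + μ (msupport μ)ᶜ := (measure_mono hsub).trans (measure_union_le _ _)
      _ = μ K := by rw [aux_measure_compl_msupport μ, add_zero]
      _ ≤ ENNReal.ofReal Λ * volume K := h1
      _ ≤ ENNReal.ofReal Λ * volume S :=
          mul_le_mul_right (measure_mono inter_subset_left) _
  calc volume Efin ≤ ENNReal.ofReal Λ * ν Efin := step1
    _ ≤ ENNReal.ofReal Λ * ν T := mul_le_mul_right (measure_mono inter_subset_left) _
    _ = ENNReal.ofReal Λ * μ (G ⁻¹' T) := by rw [step2]
    _ ≤ ENNReal.ofReal Λ * μ S := mul_le_mul_right step3 _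
    _ ≤ ENNReal.ofReal Λ * (ENNReal.ofReal Λ * volume S) := mul_le_mul_right step4 _
    _ = ENNReal.ofReal (Λ ^ 2) * volume S := by
        rw [← mul_assoc, ← ENNReal.ofReal_mul hΛ.le, ← sq]
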